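/- arXiv:1402.0223 — 10 statements merged into one kernel-verified Lean document; each statement's English description precedes it below -/
import Mathlib

section
/- Let V be a real vector space, ξ ∈ V, η : V → ℝ a linear functional with η(ξ) = 1, α : V × V → ℝ a symmetric bilinear form, and R : V × V × V → V a trilinear map such that α(R(X,Y)Z, W) + α(Z, R(X,Y)W) = 0 for all X, Y, Z, W ∈ V and R(X,Y)ξ = η(X)·Y − η(Y)·X for all X, Y ∈ V. Then α(Y, ξ) = η(Y)·α(ξ, ξ) for every Y ∈ V. -/
/-! The curvature endomorphism `R(ξ, Y)` is skew-adjoint for the symmetric form `α`, so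
`α(R(ξ, Y)ξ, ξ) = 0`; and `R(ξ, Y)ξ = Y - η(Y)ξ`. -/

theorem LinearMap.apply_self_eq_zero_of_skewAdjoint {K V : Type*} [Field K] [CharZero K]
    [AddCommGroup V] [Module K V] {α : V →ₗ[K] V →ₗ[K] K} (hα_symm : ∀ X Y : V, α X Y = α Y X)
    {T : V →ₗ[K] V} (hT : ∀ Z W : V, α (T Z) W + α Z (T W) = 0) (Z : V) :
    α (T Z) Z = 0 := by
  have h : 2 * α (T Z) Z = 0 := by
    linear_combination hT Z Z - hα_symm Z (T Z)
  exact (mul_eq_zero.1 h).resolve_left two_ne_zero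

/-- Pointwise key step: if a symmetric bilinear form `α` satisfies
`α(R(X,Y)Z, W) + α(Z, R(X,Y)W) = 0` for a trilinear map `R` with
`R(X,Y)ξ = η(X)Y − η(Y)X`, where `η` is a linear functional with
`η(ξ) = 1`, then `α(Y, ξ) = η(Y)·α(ξ, ξ)` for every `Y`. -/
theorem alpha_Y_xi
    {V : Type*} [AddCommGroup V] [Module ℝ V]
    (ξ : V) (η : V →ₗ[ℝ] ℝ) (hηξ : η ξ = 1)
    (α : V →ₗ[ℝ] V →ₗ[ℝ] ℝ) (hα_symm : ∀ X Y : V, α X Y = α Y X)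
    (R : V →ₗ[ℝ] V →ₗ[ℝ] V →ₗ[ℝ] V)
    (hαR : ∀ X Y Z W : V, α (R X Y Z) W + α Z (R X Y W) = 0)
    (hRξ : ∀ X Y : V, R X Y ξ = η X • Y - η Y • X) :
    ∀ Y : V, α Y ξ = η Y * α ξ ξ := by
  intro Y
  have h := LinearMap.apply_self_eq_zero_of_skewAdjoint hα_symm (hαR ξ Y) ξ
  rw [hRξ, hηξ, one_smul, map_sub, map_smul, LinearMap.sub_apply, LinearMap.smul_apply,
    smul_eq_mul, sub_eq_zero] at h
  exact h
end

section
/- Let V be a real vector space, g a symmetric bilinear form on V, ξ ∈ V with g(ξ,ξ) = 1, η : V → ℝ the linear functional η(X) = g(X,ξ), λ and μ real constants, and S a symmetric bilinear form on V satisfying the η-Ricci soliton equation pointwise: 2·(g(X,Y) − η(X)·η(Y)) + 2·S(X,Y) + 2λ·g(X,Y) + 2μ·η(X)·η(Y) = 0 for all X, Y ∈ V. Then S(X,Y) = −(λ+1)·g(X,Y) − (μ−1)·η(X)·η(Y) for all X, Y ∈ V (so the manifold is quasi-Einstein), and if moreover n is a natural number with S(X, ξ) = −2n·η(X) for all X ∈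 V, then λ + μ = 2n. -/
/-! Solving the soliton equation for `S` gives the quasi-Einstein form. At `(ξ, ξ)` both `g` and
`η ⊗ η` equal `1`, so that form reads `S(ξ, ξ) = -(λ + μ)`, while the paracontact identity reads
`S(ξ, ξ) = -2n`. -/

section EtaRicciSoliton

variable {V : Type*}

theorem ricci_eq_of_etaRicciSoliton (g S : V → V → ℝ) (η : V → ℝ) (lam μ : ℝ)
    (hsol : ∀ X Y : V,
      2 * (g X Y - η X * η Y) + 2 * S X Y + 2 * lam * g X Y + 2 * μ * (η X * η Y) = 0)
    (X Y : V) : S X Y = -(lam + 1) * g X Y - (μ - 1) * (η X * η Y) := by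
  linarith [hsol X Y]

theorem add_eq_of_ricci_apply_self (g S : V → V → ℝ) (η : V → ℝ) (ξ : V) (lam μ c : ℝ)
    (hξ : g ξ ξ = 1) (hηξ : η ξ = 1)
    (hS : S ξ ξ = -(lam + 1) * g ξ ξ - (μ - 1) * (η ξ * η ξ)) (hc : S ξ ξ = -c * η ξ) :
    lam + μ = c := by
  rw [hξ, hηξ] at hS
  rw [hηξ] at hc
  linarith

end EtaRicciSoliton

theorem eta_ricci_soliton_quasi_einstein_general
    {V : Type*} [AddCommGroup V] [Module ℝ V]
    (g : V →ₗ[ℝ] V →ₗ[ℝ] ℝ)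
    (ξ : V) (hξ : g ξ ξ = 1)
    (η : V → ℝ) (hη : ∀ X : V, η X = g X ξ)
    (lam μ : ℝ)
    (S : V →ₗ[ℝ] V →ₗ[ℝ] ℝ)
    (hsol : ∀ X Y : V,
      2 * (g X Y - η X * η Y) + 2 * S X Y + 2 * lam * g X Y
        + 2 * μ * (η X * η Y) = 0) :
    (∀ X Y : V, S X Y = -(lam + 1) * g X Y - (μ - 1) * (η X * η Y)) ∧
    (∀ n : ℕ, (∀ X : V, S X ξ = -(2 * (n : ℝ)) * η X) →
      lam + μ = 2 * (n : ℝ)) := by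
  have hS := ricci_eq_of_etaRicciSoliton (fun X Y => g X Y) (fun X Y => S X Y) η lam μ hsol
  have hηξ : η ξ = 1 := (hη ξ).trans hξ
  exact ⟨hS, fun n hn =>
    add_eq_of_ricci_apply_self (fun X Y => g X Y) (fun X Y => S X Y) η ξ lam μ _ hξ hηξ
      (hS ξ ξ) (hn ξ)⟩

/-- Pointwise η-Ricci soliton equation on a para-Kenmotsu manifold:
if `2(g(X,Y) − η(X)η(Y)) + 2S(X,Y) + 2λg(X,Y) + 2μη(X)η(Y) = 0` for a
symmetric bilinear form `S`, where `g(ξ,ξ) = 1` and `η(X) = g(X,ξ)`,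
then `S(X,Y) = −(λ+1)g(X,Y) − (μ−1)η(X)η(Y)` (quasi-Einstein), and if
moreover `S(X,ξ) = −2n·η(X)` for all `X`, then `λ + μ = 2n`. -/
theorem eta_ricci_soliton_quasi_einstein
    {V : Type*} [AddCommGroup V] [Module ℝ V]
    (g : V →ₗ[ℝ] V →ₗ[ℝ] ℝ) (hg_symm : ∀ X Y : V, g X Y = g Y X)
    (ξ : V) (hξ : g ξ ξ = 1)
    (η : V → ℝ) (hη : ∀ X : V, η X = g X ξ)
    (lam μ : ℝ)
    (S : V →ₗ[ℝ] V →ₗ[ℝ] ℝ) (hS_symm : ∀ X Y : V, S X Y = S Y X)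
    (hsol : ∀ X Y : V,
      2 * (g X Y - η X * η Y) + 2 * S X Y + 2 * lam * g X Y
        + 2 * μ * (η X * η Y) = 0) :
    (∀ X Y : V, S X Y = -(lam + 1) * g X Y - (μ - 1) * (η X * η Y)) ∧
    (∀ n : ℕ, (∀ X : V, S X ξ = -(2 * (n : ℝ)) * η X) →
      lam + μ = 2 * (n : ℝ)) :=
  eta_ricci_soliton_quasi_einstein_general g ξ hξ η hη lam μ S hsol
end

section
/- Assume the pointwise para-Kenmotsu η-Ricci soliton model and suppose the curvature condition R(ξ,X)·S = 0 holds, i.e. S(R(ξ,X)Y, Z) + S(Y, R(ξ,X)Z) = 0 for all X, Y, Z ∈ V, where R(ξ,X)Y = η(Y)·X − g(X,Y)·ξ. Then μ = 1, λ = 2n − 1, and S(X,Y) = −2n·g(X,Y) for all X, Y ∈ V (i.e. the manifold is Einstein). -/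
/-! Taking `Y = ξ` in `R(ξ,X)·S = 0` kills every `λ`-term and leaves
`(μ - 1)(g(X,Z) - η(X)η(Z)) = 0`. If `μ ≠ 1`, then `g(X,·) = η(X) g(ξ,·)`, so by nondegeneracy
every `X` is a multiple of `ξ`, and `V` would be a line rather than of dimension `2n + 1 ≥ 3`. -/

theorem LinearMap.finrank_le_one_of_apply_eq_mul {R M : Type*} [CommRing R] [AddCommGroup M]
    [Module R M] [StrongRankCondition R] (g : M →ₗ[R] M →ₗ[R] R)
    (hg_nd : ∀ X : M, (∀ Y : M, g X Y = 0) → X = 0) (ξ : M) (a : M → R)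
    (hg : ∀ X Y : M, g X Y = a X * g ξ Y) :
    Module.finrank R M ≤ 1 := by
  refine finrank_le_one ξ fun X => ⟨a X, ?_⟩
  have hX : X - a X • ξ = 0 := hg_nd _ fun Y => by simp [hg X Y]
  exact (sub_eq_zero.mp hX).symm

section EtaRicciSoliton

variable {V : Type*} [AddCommGroup V] [Module ℝ V]

theorem ricci_R_xi_xi_add_ricci_xi_R_xi (g : V →ₗ[ℝ] V →ₗ[ℝ] ℝ)
    (hg_symm : ∀ X Y : V, g X Y = g Y X) (ξ : V) (hξ : g ξ ξ = 1)
    (η : V → ℝ) (hη : ∀ X : V, η X = g X ξ) (lam μ : ℝ) (S : V → V → ℝ)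
    (hS : ∀ X Y : V, S X Y = -(lam + 1) * g X Y - (μ - 1) * (η X * η Y))
    (Rξ : V → V → V) (hRξ : ∀ X Y : V, Rξ X Y = η Y • X - g X Y • ξ) (X Y : V) :
    S (Rξ X ξ) Y + S ξ (Rξ X Y) = (μ - 1) * (g X Y - η X * η Y) := by
  simp only [hS, hRξ, hη, map_sub, map_smul, LinearMap.sub_apply, LinearMap.smul_apply,
    smul_eq_mul, hξ, hg_symm ξ]
  ring

end EtaRicciSoliton

theorem eta_ricci_soliton_R_xi_S_general
    {V : Type*} [AddCommGroup V] [Module ℝ V]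
    (n : ℕ) (hn : 1 ≤ n) (hdim : Module.finrank ℝ V = 2 * n + 1)
    (g : V →ₗ[ℝ] V →ₗ[ℝ] ℝ) (hg_symm : ∀ X Y : V, g X Y = g Y X)
    (hg_nd : ∀ X : V, (∀ Y : V, g X Y = 0) → X = 0)
    (ξ : V) (hξ : g ξ ξ = 1)
    (η : V → ℝ) (hη : ∀ X : V, η X = g X ξ)
    (lam μ : ℝ) (hlamμ : lam + μ = 2 * (n : ℝ))
    (S : V → V → ℝ)
    (hS : ∀ X Y : V, S X Y = -(lam + 1) * g X Y - (μ - 1) * (η X * η Y))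
    (Rξ : V → V → V)
    (hRξ : ∀ X Y : V, Rξ X Y = η Y • X - g X Y • ξ)
    (hcond : ∀ X Y Z : V, S (Rξ X Y) Z + S Y (Rξ X Z) = 0) :
    μ = 1 ∧ lam = 2 * (n : ℝ) - 1 ∧
      ∀ X Y : V, S X Y = -(2 * (n : ℝ)) * g X Y := by
  have hμ : μ = 1 := by
    by_contra hμ
    have hg : ∀ X Y : V, g X Y = η X * g ξ Y := fun X Y => by
      have h := ricci_R_xi_xi_add_ricci_xi_R_xi g hg_symm ξ hξ η hη lam μ S hS Rξ hRξ X Y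
      rw [hcond, eq_comm, mul_eq_zero, sub_eq_zero, sub_eq_zero] at h
      rw [h.resolve_left hμ, hη Y, hg_symm Y]
    have := g.finrank_le_one_of_apply_eq_mul hg_nd ξ η hg
    omega
  have hlam : lam = 2 * (n : ℝ) - 1 := by linarith
  refine ⟨hμ, hlam, fun X Y => ?_⟩
  rw [hS, hμ, hlam]
  ring

/-- Pointwise para-Kenmotsu η-Ricci soliton model satisfying
`R(ξ,X)·S = 0`, i.e. `S(R(ξ,X)Y, Z) + S(Y, R(ξ,X)Z) = 0` with
`R(ξ,X)Y = η(Y)X − g(X,Y)ξ`.  Then `μ = 1`, `λ = 2n − 1` and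
`S = −2n·g` (Einstein). -/
theorem eta_ricci_soliton_R_xi_S
    {V : Type*} [AddCommGroup V] [Module ℝ V] [FiniteDimensional ℝ V]
    (n : ℕ) (hn : 1 ≤ n) (hdim : Module.finrank ℝ V = 2 * n + 1)
    (g : V →ₗ[ℝ] V →ₗ[ℝ] ℝ) (hg_symm : ∀ X Y : V, g X Y = g Y X)
    (hg_nd : ∀ X : V, (∀ Y : V, g X Y = 0) → X = 0)
    (ξ : V) (hξ : g ξ ξ = 1)
    (η : V → ℝ) (hη : ∀ X : V, η X = g X ξ)
    (lam μ : ℝ) (hlamμ : lam + μ = 2 * (n : ℝ))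
    (S : V → V → ℝ)
    (hS : ∀ X Y : V, S X Y = -(lam + 1) * g X Y - (μ - 1) * (η X * η Y))
    (Rξ : V → V → V)
    (hRξ : ∀ X Y : V, Rξ X Y = η Y • X - g X Y • ξ)
    (hcond : ∀ X Y Z : V, S (Rξ X Y) Z + S Y (Rξ X Z) = 0) :
    μ = 1 ∧ lam = 2 * (n : ℝ) - 1 ∧
      ∀ X Y : V, S X Y = -(2 * (n : ℝ)) * g X Y :=
  eta_ricci_soliton_R_xi_S_general n hn hdim g hg_symm hg_nd ξ hξ η hη lam μ hlamμ S hS Rξ hRξ hcond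
end

section
/- Assume the pointwise para-Kenmotsu η-Ricci soliton model and suppose S(R(ξ,X)Y, Z) + S(Y, R(ξ,X)Z) = 0 for all X, Y, Z ∈ V, where R(ξ,X)Y = η(Y)·X − g(X,Y)·ξ. Then μ ≠ 0; in other words, on a para-Kenmotsu manifold satisfying R(ξ,X)·S = 0 there is no Ricci soliton (the case μ = 0) with potential vector field ξ. -/
/-!
Write `η X = g X ξ`. Expanding `S` and `R(ξ,X)`, the `g`-part of `S` is killed by the
skew-symmetry of `R(ξ,X)`, and what is left of `(R(ξ,X)·S)(Y,Z)` is
`(1 - μ) (2 η X η Y η Z - g X Y η Z - g X Z η Y)`. At `Y = ξ` this reads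
`(1 - μ) (η X η Z - g X Z) = 0`. If `μ ≠ 1`, then `g X Z = η X η Z`, so `X - η X • ξ` is
`g`-orthogonal to everything and `V` is spanned by `ξ`, which is impossible in dimension
`2n + 1 ≥ 3`. Hence `μ = 1`, and in particular `μ ≠ 0`.
-/

open Module

namespace ParaKenmotsu

variable {R M : Type*} [CommRing R] [AddCommGroup M] [Module R M]

theorem finrank_le_one_of_separatingLeft {g : M →ₗ[R] M →ₗ[R] R} [StrongRankCondition R]
    (hg : g.SeparatingLeft) (ξ : M) (h : ∀ X Y, g X Y = g X ξ * g ξ Y) :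
    finrank R M ≤ 1 := by
  refine finrank_le_one ξ fun X => ⟨g X ξ, ?_⟩
  have hX : X - g X ξ • ξ = 0 := hg _ fun Y => by simp [h X Y]
  exact (sub_eq_zero.mp hX).symm

/-- The Ricci tensor `S` of the model, with `η = g(·, ξ)` substituted. -/
def ricci (g : M →ₗ[R] M →ₗ[R] R) (ξ : M) (lam μ : R) (X Y : M) : R :=
  -(lam + 1) * g X Y - (μ - 1) * (g X ξ * g Y ξ)

/-- `curvXi g ξ X Y` is `R(ξ,X)Y`. -/
def curvXi (g : M →ₗ[R] M →ₗ[R] R) (ξ X Y : M) : M :=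
  g Y ξ • X - g X Y • ξ

theorem ricci_curvXi_add_ricci_curvXi {g : M →ₗ[R] M →ₗ[R] R} (hg_symm : ∀ X Y, g X Y = g Y X)
    {ξ : M} (hξ : g ξ ξ = 1) (lam μ : R) (X Y Z : M) :
    ricci g ξ lam μ (curvXi g ξ X Y) Z + ricci g ξ lam μ Y (curvXi g ξ X Z) =
      (1 - μ) * (2 * g X ξ * g Y ξ * g Z ξ - g X Y * g Z ξ - g X Z * g Y ξ) := by
  simp only [ricci, curvXi, map_sub, map_smul, LinearMap.sub_apply, LinearMap.smul_apply,
    smul_eq_mul, hξ]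
  rw [hg_symm ξ Z, hg_symm Y X]
  ring

theorem eq_one_of_ricci_curvXi_eq_zero {K V : Type*} [Field K] [AddCommGroup V] [Module K V]
    (hdim : 2 ≤ finrank K V) {g : V →ₗ[K] V →ₗ[K] K} (hg_symm : ∀ X Y, g X Y = g Y X)
    (hg : g.SeparatingLeft) {ξ : V} (hξ : g ξ ξ = 1) {lam μ : K}
    (hcond : ∀ X Y Z, ricci g ξ lam μ (curvXi g ξ X Y) Z + ricci g ξ lam μ Y (curvXi g ξ X Z) = 0) :
    μ = 1 := by
  by_contra hμ
  have hfactor : ∀ X Z, g X Z = g X ξ * g ξ Z := fun X Z => by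
    have h := ricci_curvXi_add_ricci_curvXi hg_symm hξ lam μ X ξ Z
    rw [hcond, hξ] at h
    have hXZ : g X ξ * g Z ξ - g X Z = 0 :=
      (mul_eq_zero.mp (by linear_combination -h)).resolve_left (sub_ne_zero.mpr (Ne.symm hμ))
    rw [hg_symm ξ Z]
    linear_combination -hXZ
  have := finrank_le_one_of_separatingLeft hg ξ hfactor
  omega

end ParaKenmotsu

theorem no_ricci_soliton_R_xi_S_general
    {V : Type*} [AddCommGroup V] [Module ℝ V] [FiniteDimensional ℝ V]
    (n : ℕ) (hn : 1 ≤ n) (hdim : Module.finrank ℝ V = 2 * n + 1)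
    (g : V →ₗ[ℝ] V →ₗ[ℝ] ℝ) (hg_symm : ∀ X Y : V, g X Y = g Y X)
    (hg_nd : ∀ X : V, (∀ Y : V, g X Y = 0) → X = 0)
    (ξ : V) (hξ : g ξ ξ = 1)
    (η : V → ℝ) (hη : ∀ X : V, η X = g X ξ)
    (lam μ : ℝ)
    (S : V → V → ℝ)
    (hS : ∀ X Y : V, S X Y = -(lam + 1) * g X Y - (μ - 1) * (η X * η Y))
    (Rξ : V → V → V)
    (hRξ : ∀ X Y : V, Rξ X Y = η Y • X - g X Y • ξ)
    (hcond : ∀ X Y Z : V, S (Rξ X Y) Z + S Y (Rξ X Z) = 0) :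
    μ ≠ 0 := by
  obtain rfl : η = fun X => g X ξ := funext hη
  obtain rfl : S = ParaKenmotsu.ricci g ξ lam μ := funext₂ hS
  obtain rfl : Rξ = ParaKenmotsu.curvXi g ξ := funext₂ hRξ
  have hμ : μ = 1 :=
    ParaKenmotsu.eq_one_of_ricci_curvXi_eq_zero (by omega) hg_symm hg_nd hξ hcond
  exact hμ ▸ one_ne_zero

/-- Pointwise para-Kenmotsu η-Ricci soliton model satisfying
`R(ξ,X)·S = 0`: then `μ ≠ 0`, i.e. there is no Ricci soliton
(the case `μ = 0`) with potential vector field `ξ`. -/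
theorem no_ricci_soliton_R_xi_S
    {V : Type*} [AddCommGroup V] [Module ℝ V] [FiniteDimensional ℝ V]
    (n : ℕ) (hn : 1 ≤ n) (hdim : Module.finrank ℝ V = 2 * n + 1)
    (g : V →ₗ[ℝ] V →ₗ[ℝ] ℝ) (hg_symm : ∀ X Y : V, g X Y = g Y X)
    (hg_nd : ∀ X : V, (∀ Y : V, g X Y = 0) → X = 0)
    (ξ : V) (hξ : g ξ ξ = 1)
    (η : V → ℝ) (hη : ∀ X : V, η X = g X ξ)
    (lam μ : ℝ) (hlamμ : lam + μ = 2 * (n : ℝ))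
    (S : V → V → ℝ)
    (hS : ∀ X Y : V, S X Y = -(lam + 1) * g X Y - (μ - 1) * (η X * η Y))
    (Rξ : V → V → V)
    (hRξ : ∀ X Y : V, Rξ X Y = η Y • X - g X Y • ξ)
    (hcond : ∀ X Y Z : V, S (Rξ X Y) Z + S Y (Rξ X Z) = 0) :
    μ ≠ 0 :=
  no_ricci_soliton_R_xi_S_general n hn hdim g hg_symm hg_nd ξ hξ η hη lam μ S hS Rξ hRξ hcond
end

section
/- Assume the pointwise para-Kenmotsu η-Ricci soliton model and let R : V × V × V → V be a trilinear map satisfying R(X,Y)ξ = η(X)·Y − η(Y)·X and η(R(X,Y)Z) = −η(X)·g(Y,Z) + η(Y)·g(X,Z) for all X, Y, Z ∈ V. Suppose the condition S(ξ,X)·R = 0 holds, i.e. for all X, Y, Z, W ∈ V: S(X,R(Y,Z)W)·ξ − S(ξ,R(Y,Z)W)·X + S(X,Y)·R(ξ,Z)W − S(ξ,Y)·R(X,Z)W + S(X,Z)·R(Y,ξ)W − S(ξ,Z)·R(Y,X)W + S(X,W)·R(Y,Z)ξ − S(ξ,W)·R(Y,Z)X = 0. Then μ = 4n + 1 and λ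 = −2n − 1. -/
/-!
Take `Z = W = ξ` in the condition and pair it with `ξ`. For `S = α g + β η ⊗ η`, the curvature
identities kill all but two of the eight terms, leaving `(2α + β) (g(X,Y) − η(X) η(Y)) = 0`.
Since `g` is nondegenerate and `dim V ≥ 2`, `g − η ⊗ η` does not vanish identically, so
`2α + β = −(2λ + μ + 1) = 0`; together with `λ + μ = 2n` this determines `λ` and `μ`.
-/

open Module

theorem exists_apply_ne_mul_apply_of_one_lt_finrank {K V : Type*} [Field K] [AddCommGroup V]
    [Module K V] (g : V →ₗ[K] V →ₗ[K] K) (hg_symm : ∀ X Y : V, g X Y = g Y X)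
    (hg_nd : ∀ X : V, (∀ Y : V, g X Y = 0) → X = 0) (ξ : V) (hV : 1 < finrank K V) :
    ∃ X Y : V, g X Y ≠ g X ξ * g Y ξ := by
  by_contra! h
  refine hV.not_ge (finrank_le_one ξ fun Y ↦ ⟨g Y ξ, ?_⟩)
  refine sub_eq_zero.mp (hg_nd _ fun X ↦ ?_)
  simp only [map_sub, map_smul, LinearMap.sub_apply, LinearMap.smul_apply, smul_eq_mul,
    hg_symm ξ X, hg_symm Y X, h X Y, sub_eq_zero, mul_comm]

theorem two_mul_add_mul_sub_mul_eq_zero_of_ricci_xi_curvature {K V : Type*} [CommRing K]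
    [AddCommGroup V] [Module K V] (g : V →ₗ[K] V →ₗ[K] K)
    (hg_symm : ∀ X Y : V, g X Y = g Y X) (ξ : V) (hξ : g ξ ξ = 1)
    (η : V → K) (hη : ∀ X : V, η X = g X ξ) (α β : K) (S : V → V → K)
    (hS : ∀ X Y : V, S X Y = α * g X Y + β * (η X * η Y))
    (R : V →ₗ[K] V →ₗ[K] V →ₗ[K] V)
    (hRξ : ∀ X Y : V, R X Y ξ = η X • Y - η Y • X)
    (hηR : ∀ X Y Z : V, η (R X Y Z) = -(η X) * g Y Z + η Y * g X Z)
    (hcond : ∀ X Y Z W : V,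
      S X (R Y Z W) • ξ - S ξ (R Y Z W) • X + S X Y • R ξ Z W
        - S ξ Y • R X Z W + S X Z • R Y ξ W - S ξ Z • R Y X W
        + S X W • R Y Z ξ - S ξ W • R Y Z X = 0) (X Y : V) :
    (2 * α + β) * (g X Y - η X * η Y) = 0 := by
  obtain rfl : η = fun X ↦ g X ξ := funext hη
  have key := congrArg (g · ξ) (hcond X Y ξ ξ)
  simp only [hRξ, hηR, hS, map_add, map_sub, map_smul, map_zero, LinearMap.add_apply,
    LinearMap.sub_apply, LinearMap.smul_apply, LinearMap.zero_apply, smul_eq_mul, hξ,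
    hg_symm ξ, hg_symm Y X] at key
  linear_combination -key

theorem eta_ricci_soliton_S_xi_R_general
    {V : Type*} [AddCommGroup V] [Module ℝ V]
    (n : ℕ) (hn : 1 ≤ n) (hdim : Module.finrank ℝ V = 2 * n + 1)
    (g : V →ₗ[ℝ] V →ₗ[ℝ] ℝ) (hg_symm : ∀ X Y : V, g X Y = g Y X)
    (hg_nd : ∀ X : V, (∀ Y : V, g X Y = 0) → X = 0)
    (ξ : V) (hξ : g ξ ξ = 1)
    (η : V → ℝ) (hη : ∀ X : V, η X = g X ξ)
    (lam μ : ℝ) (hlamμ : lam + μ = 2 * (n : ℝ))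
    (S : V → V → ℝ)
    (hS : ∀ X Y : V, S X Y = -(lam + 1) * g X Y - (μ - 1) * (η X * η Y))
    (R : V →ₗ[ℝ] V →ₗ[ℝ] V →ₗ[ℝ] V)
    (hRξ : ∀ X Y : V, R X Y ξ = η X • Y - η Y • X)
    (hηR : ∀ X Y Z : V, η (R X Y Z) = -(η X) * g Y Z + η Y * g X Z)
    (hcond : ∀ X Y Z W : V,
      S X (R Y Z W) • ξ - S ξ (R Y Z W) • X + S X Y • R ξ Z W
        - S ξ Y • R X Z W + S X Z • R Y ξ W - S ξ Z • R Y X W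
        + S X W • R Y Z ξ - S ξ W • R Y Z X = 0) :
    μ = 4 * (n : ℝ) + 1 ∧ lam = -(2 * (n : ℝ)) - 1 := by
  obtain ⟨X, Y, hXY⟩ :=
    exists_apply_ne_mul_apply_of_one_lt_finrank g hg_symm hg_nd ξ (by omega)
  have hprod := two_mul_add_mul_sub_mul_eq_zero_of_ricci_xi_curvature g hg_symm ξ hξ η hη
    (-(lam + 1)) (-(μ - 1)) S (fun X Y ↦ by rw [hS]; ring) R hRξ hηR hcond X Y
  rw [hη, hη] at hprod
  have hcoeff := (mul_eq_zero.mp hprod).resolve_right (sub_ne_zero.mpr hXY)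
  constructor <;> linarith

/-- Pointwise para-Kenmotsu η-Ricci soliton model with a trilinear
curvature `R` satisfying `R(X,Y)ξ = η(X)Y − η(Y)X` and
`η(R(X,Y)Z) = −η(X)g(Y,Z) + η(Y)g(X,Z)`, and the condition
`S(ξ,X)·R = 0`.  Then `μ = 4n + 1` and `λ = −2n − 1`. -/
theorem eta_ricci_soliton_S_xi_R
    {V : Type*} [AddCommGroup V] [Module ℝ V] [FiniteDimensional ℝ V]
    (n : ℕ) (hn : 1 ≤ n) (hdim : Module.finrank ℝ V = 2 * n + 1)
    (g : V →ₗ[ℝ] V →ₗ[ℝ] ℝ) (hg_symm : ∀ X Y : V, g X Y = g Y X)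
    (hg_nd : ∀ X : V, (∀ Y : V, g X Y = 0) → X = 0)
    (ξ : V) (hξ : g ξ ξ = 1)
    (η : V → ℝ) (hη : ∀ X : V, η X = g X ξ)
    (lam μ : ℝ) (hlamμ : lam + μ = 2 * (n : ℝ))
    (S : V → V → ℝ)
    (hS : ∀ X Y : V, S X Y = -(lam + 1) * g X Y - (μ - 1) * (η X * η Y))
    (R : V →ₗ[ℝ] V →ₗ[ℝ] V →ₗ[ℝ] V)
    (hRξ : ∀ X Y : V, R X Y ξ = η X • Y - η Y • X)
    (hηR : ∀ X Y Z : V, η (R X Y Z) = -(η X) * g Y Z + η Y * g X Z)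
    (hcond : ∀ X Y Z W : V,
      S X (R Y Z W) • ξ - S ξ (R Y Z W) • X + S X Y • R ξ Z W
        - S ξ Y • R X Z W + S X Z • R Y ξ W - S ξ Z • R Y X W
        + S X W • R Y Z ξ - S ξ W • R Y Z X = 0) :
    μ = 4 * (n : ℝ) + 1 ∧ lam = -(2 * (n : ℝ)) - 1 :=
  eta_ricci_soliton_S_xi_R_general n hn hdim g hg_symm hg_nd ξ hξ η hη lam μ hlamμ S hS R hRξ hηR
    hcond
end

section
/- Assume the pointwise para-Kenmotsu η-Ricci soliton model and let R : V × V × V → V be a trilinear map satisfying R(X,Y)ξ = η(X)·Y − η(Y)·X and η(R(X,Y)Z) = −η(X)·g(Y,Z) + η(Y)·g(X,Z) for all X, Y, Z ∈ V, and suppose that for all X, Y, Z, W ∈ V: S(X,R(Y,Z)W)·ξ − S(ξ,R(Y,Z)W)·X + S(X,Y)·R(ξ,Z)W − S(ξ,Y)·R(X,Z)W + S(X,Z)·R(Y,ξ)W − S(ξ,Z)·R(Y,X)W + S(X,W)·R(Y,Z)ξ − S(ξ,W)·R(Y,Z)X = 0. Then μ ≠ 0; in other words, on a para-Kenmotsu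 manifold satisfying S(ξ,X)·R = 0 there is no Ricci soliton (the case μ = 0) with potential vector field ξ. -/
/-!
For `X, Z ⊥ ξ`, the condition at `(X, ξ, Z, ξ)` collapses to
`-(λ+1) g(X,Z) ξ + (λ+μ) R(ξ,Z)X = 0`, and applying `η` gives `(2λ+μ+1) g(X,Z) = 0`.
If `μ = 0` then `λ = 2n`, so `g` vanishes on `ξ^⊥ × ξ^⊥`; as `V = ξ^⊥ ⊕ ℝξ`, every vector of
`ξ^⊥` is then in the radical of `g`, and `ξ^⊥ ≠ 0` because `dim V ≥ 2`.
-/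

open Module

section

variable {V : Type*} [AddCommGroup V] [Module ℝ V]

lemma exists_ne_zero_apply_eq_zero_of_one_lt_finrank [FiniteDimensional ℝ V]
    (hV : 1 < finrank ℝ V) (f : V →ₗ[ℝ] ℝ) : ∃ X, X ≠ 0 ∧ f X = 0 := by
  obtain ⟨X, hX, hX0⟩ := (Submodule.ne_bot_iff _).1 <|
    LinearMap.ker_ne_bot_of_finrank_lt (f := f) (by rwa [finrank_self])
  exact ⟨X, hX0, hX⟩

variable {g : V →ₗ[ℝ] V →ₗ[ℝ] ℝ} {ξ : V}

lemma eq_zero_of_forall_orthogonal (hg_nd : ∀ X : V, (∀ Y : V, g X Y = 0) → X = 0)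
    (hξ : g ξ ξ = 1) {X : V} (hXξ : g X ξ = 0) (hX : ∀ Z, g Z ξ = 0 → g X Z = 0) :
    X = 0 :=
  hg_nd X fun Y => by simpa [hXξ] using hX (Y - g Y ξ • ξ) (by simp [hξ])

variable {η : V → ℝ} {lam μ : ℝ} {S : V → V → ℝ} {R : V →ₗ[ℝ] V →ₗ[ℝ] V →ₗ[ℝ] V}

lemma mul_apply_eq_zero_of_orthogonal_of_S_xi_R (hg_symm : ∀ X Y : V, g X Y = g Y X)
    (hξ : g ξ ξ = 1) (hη : ∀ X : V, η X = g X ξ)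
    (hS : ∀ X Y : V, S X Y = -(lam + 1) * g X Y - (μ - 1) * (η X * η Y))
    (hRξ : ∀ X Y : V, R X Y ξ = η X • Y - η Y • X)
    (hηR : ∀ X Y Z : V, η (R X Y Z) = -(η X) * g Y Z + η Y * g X Z)
    (hcond : ∀ X Y Z W : V,
      S X (R Y Z W) • ξ - S ξ (R Y Z W) • X + S X Y • R ξ Z W
        - S ξ Y • R X Z W + S X Z • R Y ξ W - S ξ Z • R Y X W
        + S X W • R Y Z ξ - S ξ W • R Y Z X = 0)
    {X Z : V} (hX : g X ξ = 0) (hZ : g Z ξ = 0) :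
    (2 * lam + μ + 1) * g X Z = 0 := by
  have hZ' : g ξ Z = 0 := by rw [hg_symm, hZ]
  have hvec : (-(lam + 1) * g X Z) • ξ + (lam + μ) • R ξ Z X = 0 := by
    have h := hcond X ξ Z ξ
    simp only [hRξ, hS, hη, hξ, hX, hZ, hZ', one_smul, zero_smul, sub_zero, sub_self] at h
    convert h using 1
    module
  have hRη : η (R ξ Z X) = -g X Z := by
    rw [hηR, hη, hη, hξ, hZ, hg_symm]
    ring
  have h := congrArg (g · ξ) hvec
  simp only [map_add, map_smul, LinearMap.add_apply, LinearMap.smul_apply, smul_eq_mul, hξ,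
    ← hη, hRη, map_zero, LinearMap.zero_apply] at h
  linear_combination -h

end

/-- Pointwise para-Kenmotsu η-Ricci soliton model with a trilinear
curvature `R` satisfying `R(X,Y)ξ = η(X)Y − η(Y)X` and
`η(R(X,Y)Z) = −η(X)g(Y,Z) + η(Y)g(X,Z)`, and the condition
`S(ξ,X)·R = 0`.  Then `μ ≠ 0`: there is no Ricci soliton (the case
`μ = 0`) with potential vector field `ξ`. -/
theorem no_ricci_soliton_S_xi_R
    {V : Type*} [AddCommGroup V] [Module ℝ V] [FiniteDimensional ℝ V]
    (n : ℕ) (hn : 1 ≤ n) (hdim : Module.finrank ℝ V = 2 * n + 1)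
    (g : V →ₗ[ℝ] V →ₗ[ℝ] ℝ) (hg_symm : ∀ X Y : V, g X Y = g Y X)
    (hg_nd : ∀ X : V, (∀ Y : V, g X Y = 0) → X = 0)
    (ξ : V) (hξ : g ξ ξ = 1)
    (η : V → ℝ) (hη : ∀ X : V, η X = g X ξ)
    (lam μ : ℝ) (hlamμ : lam + μ = 2 * (n : ℝ))
    (S : V → V → ℝ)
    (hS : ∀ X Y : V, S X Y = -(lam + 1) * g X Y - (μ - 1) * (η X * η Y))
    (R : V →ₗ[ℝ] V →ₗ[ℝ] V →ₗ[ℝ] V)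
    (hRξ : ∀ X Y : V, R X Y ξ = η X • Y - η Y • X)
    (hηR : ∀ X Y Z : V, η (R X Y Z) = -(η X) * g Y Z + η Y * g X Z)
    (hcond : ∀ X Y Z W : V,
      S X (R Y Z W) • ξ - S ξ (R Y Z W) • X + S X Y • R ξ Z W
        - S ξ Y • R X Z W + S X Z • R Y ξ W - S ξ Z • R Y X W
        + S X W • R Y Z ξ - S ξ W • R Y Z X = 0) :
    μ ≠ 0 := by
  rintro rfl
  have hcoef : 2 * lam + 0 + 1 ≠ 0 := ne_of_gt (by linarith [n.cast_nonneg (α := ℝ)])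
  obtain ⟨X, hX0, hXξ⟩ := exists_ne_zero_apply_eq_zero_of_one_lt_finrank (by omega) (g.flip ξ)
  refine hX0 (eq_zero_of_forall_orthogonal hg_nd hξ hXξ fun Z hZ => ?_)
  exact (mul_eq_zero.1 (mul_apply_eq_zero_of_orthogonal_of_S_xi_R hg_symm hξ hη hS hRξ hηR
    hcond hXξ hZ)).resolve_left hcoef
end

section
/- Assume the pointwise para-Kenmotsu η-Ricci soliton model. Define Q(X) = −(2n+1−μ)·X − (μ−1)·η(X)·ξ and, using R(ξ,X)Y = η(Y)·X − g(X,Y)·ξ, define W₂(ξ,X)Y = R(ξ,X)Y + (1/(2n))·(η(Y)·Q(X) − g(X,Y)·Q(ξ)). Suppose the condition W₂(ξ,X)·S = 0 holds, i.e. S(W₂(ξ,X)Y, Z) + S(Y, W₂(ξ,X)Z) = 0 for all X, Y, Z ∈ V. Then either μ = 1 and λ = 2n − 1, or μ = 2n + 1 and λ = −1. -/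
/-!
Pick a vector `X` orthogonal to `ξ` with `g X X ≠ 0`; it exists because `g` is
nondegenerate and `ξ` is not isotropic. For such `X` one finds `Q ξ = -2n ξ`,
`W₂(ξ,X)X = 0` and `W₂(ξ,X)ξ = ((μ-1)/2n) X`, so the condition `W₂(ξ,X)·S = 0` evaluated at
`(X, ξ)` reads `(λ+1)(μ-1)/(2n) · g(X,X) = 0`. Hence `λ = -1` or `μ = 1`, and `λ + μ = 2n`
fixes the other constant.
-/

section Orthogonal

variable {K V : Type*} [Field K] [AddCommGroup V] [Module K V]

theorem LinearMap.exists_orthogonal_not_isotropic [NeZero (2 : K)] (g : V →ₗ[K] V →ₗ[K] K)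
    (hsymm : ∀ X Y, g X Y = g Y X) (hnd : g.SeparatingLeft) {ξ : V} (hξ : g ξ ξ ≠ 0)
    (hdim : 2 ≤ Module.finrank K V) : ∃ X, g X ξ = 0 ∧ g X X ≠ 0 := by
  by_contra! hiso
  have horth : ∀ A B, g A ξ = 0 → g B ξ = 0 → g A B = 0 := by
    intro A B hA hB
    have hAB := hiso (A + B) (by simp [hA, hB])
    simp only [map_add, LinearMap.add_apply, hiso A hA, hiso B hB, hsymm B A] at hAB
    simpa [← two_mul, two_ne_zero] using hAB
  -- `Y - (g Y ξ / g ξ ξ) ξ` is orthogonal to `ξ`, so `ξ^⊥` pairs to zero with all of `V`.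
  have hker : ∀ A, g A ξ = 0 → A = 0 := by
    intro A hA
    refine hnd A fun Y => ?_
    have hY : g (Y - (g Y ξ / g ξ ξ) • ξ) ξ = 0 := by
      simp [div_mul_cancel₀ _ hξ]
    simpa [hA] using horth A _ hA hY
  have hinj : Function.Injective (g.flip ξ) := (injective_iff_map_eq_zero _).mpr hker
  have := LinearMap.finrank_le_finrank_of_injective hinj
  rw [Module.finrank_self] at this
  omega

end Orthogonal

noncomputable section ParaKenmotsu

variable {V : Type*} [AddCommGroup V] [Module ℝ V] (g : V →ₗ[ℝ] V →ₗ[ℝ] ℝ) (ξ : V) (m μ : ℝ)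

/-- The Ricci operator `Q`, with `m = 2n` and `η = g(·, ξ)`. -/
def ricciOp (X : V) : V := -(m + 1 - μ) • X - ((μ - 1) * g X ξ) • ξ

/-- `W₂(ξ, X) Y`, with `m = 2n` and `η = g(·, ξ)`. -/
def w2Xi (X Y : V) : V :=
  (g Y ξ • X - g X Y • ξ) + (1 / m) • (g Y ξ • ricciOp g ξ m μ X - g X Y • ricciOp g ξ m μ ξ)

variable {g ξ m μ}

theorem ricciOp_self (hξ : g ξ ξ = 1) : ricciOp g ξ m μ ξ = -m • ξ := by
  simp only [ricciOp, hξ, mul_one, ← sub_smul]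
  congr 1
  ring

theorem ricciOp_of_orthogonal {X : V} (hX : g X ξ = 0) :
    ricciOp g ξ m μ X = -(m + 1 - μ) • X := by
  simp [ricciOp, hX]

theorem w2Xi_self_of_orthogonal (hm : m ≠ 0) (hξ : g ξ ξ = 1) {X : V} (hX : g X ξ = 0) :
    w2Xi g ξ m μ X X = 0 := by
  simp only [w2Xi, hX, ricciOp_self hξ, zero_smul, zero_sub]
  match_scalars
  field_simp
  ring

theorem w2Xi_xi_of_orthogonal (hm : m ≠ 0) (hξ : g ξ ξ = 1) {X : V} (hX : g X ξ = 0) :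
    w2Xi g ξ m μ X ξ = ((μ - 1) / m) • X := by
  simp only [w2Xi, hX, hξ, ricciOp_of_orthogonal hX, zero_smul, sub_zero, one_smul]
  match_scalars
  field_simp
  ring

end ParaKenmotsu

theorem eta_ricci_soliton_W2_xi_S_general
    {V : Type*} [AddCommGroup V] [Module ℝ V]
    (n : ℕ) (hn : 1 ≤ n) (hdim : Module.finrank ℝ V = 2 * n + 1)
    (g : V →ₗ[ℝ] V →ₗ[ℝ] ℝ) (hg_symm : ∀ X Y : V, g X Y = g Y X)
    (hg_nd : ∀ X : V, (∀ Y : V, g X Y = 0) → X = 0)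
    (ξ : V) (hξ : g ξ ξ = 1)
    (η : V → ℝ) (hη : ∀ X : V, η X = g X ξ)
    (lam μ : ℝ) (hlamμ : lam + μ = 2 * (n : ℝ))
    (S : V → V → ℝ)
    (hS : ∀ X Y : V, S X Y = -(lam + 1) * g X Y - (μ - 1) * (η X * η Y))
    (Q : V → V)
    (hQ : ∀ X : V, Q X = -(2 * (n : ℝ) + 1 - μ) • X - ((μ - 1) * η X) • ξ)
    (W₂ : V → V → V)
    (hW₂ : ∀ X Y : V, W₂ X Y =
      (η Y • X - g X Y • ξ)
        + (1 / (2 * (n : ℝ))) • (η Y • Q X - g X Y • Q ξ))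
    (hcond : ∀ X Y Z : V, S (W₂ X Y) Z + S Y (W₂ X Z) = 0) :
    (μ = 1 ∧ lam = 2 * (n : ℝ) - 1) ∨ (μ = 2 * (n : ℝ) + 1 ∧ lam = -1) := by
  obtain rfl : η = (g · ξ) := funext hη
  obtain rfl : Q = ricciOp g ξ (2 * n) μ := funext hQ
  obtain rfl : W₂ = w2Xi g ξ (2 * n) μ := funext₂ hW₂
  have hm : (2 * n : ℝ) ≠ 0 := by positivity
  obtain ⟨X, hXξ, hXX⟩ :=
    g.exists_orthogonal_not_isotropic hg_symm hg_nd (by rw [hξ]; exact one_ne_zero) (by omega)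
  have key := hcond X X ξ
  rw [w2Xi_self_of_orthogonal hm hξ hXξ, w2Xi_xi_of_orthogonal hm hξ hXξ, hS, hS] at key
  simp only [map_zero, LinearMap.zero_apply, map_smul, smul_eq_mul, hXξ] at key
  have hprod : (lam + 1) * (μ - 1) = 0 := by
    have : (lam + 1) * (μ - 1) * g X X / (2 * n) = 0 := by linear_combination -key
    simpa [hm, hXX] using this
  rcases mul_eq_zero.mp hprod with h | h
  · exact .inr ⟨by linarith, by linarith⟩
  · exact .inl ⟨by linarith, by linarith⟩

/-- Pointwise para-Kenmotsu η-Ricci soliton model with Ricci operator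
`Q(X) = −(2n+1−μ)X − (μ−1)η(X)ξ` and
`W₂(ξ,X)Y = R(ξ,X)Y + (1/(2n))(η(Y)Q(X) − g(X,Y)Q(ξ))`, where
`R(ξ,X)Y = η(Y)X − g(X,Y)ξ`, satisfying `W₂(ξ,X)·S = 0`.
Then either `μ = 1` and `λ = 2n − 1`, or `μ = 2n + 1` and `λ = −1`. -/
theorem eta_ricci_soliton_W2_xi_S
    {V : Type*} [AddCommGroup V] [Module ℝ V] [FiniteDimensional ℝ V]
    (n : ℕ) (hn : 1 ≤ n) (hdim : Module.finrank ℝ V = 2 * n + 1)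
    (g : V →ₗ[ℝ] V →ₗ[ℝ] ℝ) (hg_symm : ∀ X Y : V, g X Y = g Y X)
    (hg_nd : ∀ X : V, (∀ Y : V, g X Y = 0) → X = 0)
    (ξ : V) (hξ : g ξ ξ = 1)
    (η : V → ℝ) (hη : ∀ X : V, η X = g X ξ)
    (lam μ : ℝ) (hlamμ : lam + μ = 2 * (n : ℝ))
    (S : V → V → ℝ)
    (hS : ∀ X Y : V, S X Y = -(lam + 1) * g X Y - (μ - 1) * (η X * η Y))
    (Q : V → V)
    (hQ : ∀ X : V, Q X = -(2 * (n : ℝ) + 1 - μ) • X - ((μ - 1) * η X) • ξ)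
    (W₂ : V → V → V)
    (hW₂ : ∀ X Y : V, W₂ X Y =
      (η Y • X - g X Y • ξ)
        + (1 / (2 * (n : ℝ))) • (η Y • Q X - g X Y • Q ξ))
    (hcond : ∀ X Y Z : V, S (W₂ X Y) Z + S Y (W₂ X Z) = 0) :
    (μ = 1 ∧ lam = 2 * (n : ℝ) - 1) ∨ (μ = 2 * (n : ℝ) + 1 ∧ lam = -1) :=
  eta_ricci_soliton_W2_xi_S_general n hn hdim g hg_symm hg_nd ξ hξ η hη lam μ hlamμ S hS Q hQ W₂ hW₂
    hcond
end

section
/- Assume the pointwise para-Kenmotsu η-Ricci soliton model. Define Q(X) = −(2n+1−μ)·X − (μ−1)·η(X)·ξ and, using R(ξ,X)Y = η(Y)·X − g(X,Y)·ξ, define W₂(ξ,X)Y = R(ξ,X)Y + (1/(2n))·(η(Y)·Q(X) − g(X,Y)·Q(ξ)), and suppose S(W₂(ξ,X)Y, Z) + S(Y, W₂(ξ,X)Z) = 0 for all X, Y, Z ∈ V. Then μ ≠ 0; in other words, on a para-Kenmotsu manifold satisfying W₂(ξ,X)·S = 0 there is no Ricci soliton (the case μ = 0) with potential vector field ξ.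 -/
/-!
Since `η(ξ) = 1`, the Ricci operator collapses `W₂` to
`W₂(ξ,X)Y = ((μ - 1)/(2n)) η(Y) (X - η(X) ξ)`. Taking `X ≠ 0` orthogonal to `ξ` (which exists as
`dim V > 1`) and `Y = ξ` in `W₂(ξ,X)·S = 0` leaves `((μ - 1)/(2n)) (λ + 1) g(X, Z) = 0` for all `Z`,
so nondegeneracy forces `(μ - 1)(λ + 1) = 0`. With `λ + μ = 2n` this means `μ = 1` or `μ = 2n + 1`.
-/

open Module

section

variable {V : Type*} [AddCommGroup V] [Module ℝ V]

lemma exists_ne_zero_apply_eq_zero [FiniteDimensional ℝ V] (hV : 1 < finrank ℝ V)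
    (f : V →ₗ[ℝ] ℝ) : ∃ X : V, X ≠ 0 ∧ f X = 0 := by
  have hker : LinearMap.ker f ≠ ⊥ := LinearMap.ker_ne_bot_of_finrank_lt (by simpa using hV)
  obtain ⟨X, hX, hX0⟩ := Submodule.exists_mem_ne_zero_of_ne_bot hker
  exact ⟨X, hX0, hX⟩

lemma W₂_xi_eq (g : V →ₗ[ℝ] V →ₗ[ℝ] ℝ) (ξ : V) (η : V → ℝ) (hηξ : η ξ = 1)
    (n μ : ℝ) (hn : n ≠ 0) (Q : V → V)
    (hQ : ∀ X : V, Q X = -(2 * n + 1 - μ) • X - ((μ - 1) * η X) • ξ) (X Y : V) :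
    (η Y • X - g X Y • ξ) + (1 / (2 * n)) • (η Y • Q X - g X Y • Q ξ)
      = ((μ - 1) / (2 * n) * η Y) • (X - η X • ξ) := by
  rw [hQ, hQ, hηξ]
  match_scalars <;> field_simp <;> ring

lemma S_apply_eq_of_eta_left (g : V →ₗ[ℝ] V →ₗ[ℝ] ℝ) (η : V → ℝ) (lam μ : ℝ) (S : V → V → ℝ)
    (hS : ∀ X Y : V, S X Y = -(lam + 1) * g X Y - (μ - 1) * (η X * η Y))
    {X : V} (hX : η X = 0) (Y : V) : S X Y = -(lam + 1) * g X Y := by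
  simp [hS, hX]

lemma S_apply_eq_of_eta_right (g : V →ₗ[ℝ] V →ₗ[ℝ] ℝ) (η : V → ℝ) (lam μ : ℝ) (S : V → V → ℝ)
    (hS : ∀ X Y : V, S X Y = -(lam + 1) * g X Y - (μ - 1) * (η X * η Y))
    {Y : V} (hY : η Y = 0) (X : V) : S X Y = -(lam + 1) * g X Y := by
  simp [hS, hY]

lemma mu_sub_one_mul_lam_add_one_eq_zero [FiniteDimensional ℝ V] (hV : 1 < finrank ℝ V)
    (g : V →ₗ[ℝ] V →ₗ[ℝ] ℝ) (hg_symm : ∀ X Y : V, g X Y = g Y X)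
    (hg_nd : ∀ X : V, (∀ Y : V, g X Y = 0) → X = 0)
    (ξ : V) (hξ : g ξ ξ = 1) (η : V → ℝ) (hη : ∀ X : V, η X = g X ξ)
    (n lam μ : ℝ) (hn : n ≠ 0) (S : V → V → ℝ)
    (hS : ∀ X Y : V, S X Y = -(lam + 1) * g X Y - (μ - 1) * (η X * η Y))
    (Q : V → V) (hQ : ∀ X : V, Q X = -(2 * n + 1 - μ) • X - ((μ - 1) * η X) • ξ)
    (W₂ : V → V → V)
    (hW₂ : ∀ X Y : V, W₂ X Y =
      (η Y • X - g X Y • ξ) + (1 / (2 * n)) • (η Y • Q X - g X Y • Q ξ))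
    (hcond : ∀ X Y Z : V, S (W₂ X Y) Z + S Y (W₂ X Z) = 0) :
    (μ - 1) * (lam + 1) = 0 := by
  have hηξ : η ξ = 1 := by rw [hη, hξ]
  obtain ⟨X, hX0, hXξ⟩ := exists_ne_zero_apply_eq_zero hV (g.flip ξ)
  have hηX : η X = 0 := by rwa [hη]
  have hηX_smul : ∀ a : ℝ, η (a • X) = 0 := fun a => by
    rw [hη, map_smul, LinearMap.smul_apply, ← hη, hηX, smul_zero]
  set c := (μ - 1) / (2 * n)
  have hW : ∀ Y, W₂ X Y = (c * η Y) • X := fun Y => by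
    rw [hW₂, W₂_xi_eq g ξ η hηξ n μ hn Q hQ, hηX, zero_smul, sub_zero]
  have hgX : ∀ Z, (c * (lam + 1)) * g X Z = 0 := fun Z => by
    have h := hcond X ξ Z
    rw [hW, hW, hηξ, mul_one, S_apply_eq_of_eta_left g η lam μ S hS (hηX_smul c),
      S_apply_eq_of_eta_right g η lam μ S hS (hηX_smul _), map_smul, map_smul, hg_symm ξ,
      LinearMap.smul_apply, ← hη, hηX] at h
    simp only [smul_eq_mul] at h
    linear_combination -h
  have hc : c * (lam + 1) = 0 := by
    by_contra hne
    exact hX0 (hg_nd X fun Z => (mul_eq_zero.mp (hgX Z)).resolve_left hne)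
  simpa [c, hn, mul_div_right_comm] using hc

end

/-- Pointwise para-Kenmotsu η-Ricci soliton model with Ricci operator
`Q(X) = −(2n+1−μ)X − (μ−1)η(X)ξ` and
`W₂(ξ,X)Y = R(ξ,X)Y + (1/(2n))(η(Y)Q(X) − g(X,Y)Q(ξ))`, where
`R(ξ,X)Y = η(Y)X − g(X,Y)ξ`, satisfying `W₂(ξ,X)·S = 0`.
Then `μ ≠ 0`: there is no Ricci soliton (the case `μ = 0`) with
potential vector field `ξ`. -/
theorem no_ricci_soliton_W2_xi_S
    {V : Type*} [AddCommGroup V] [Module ℝ V] [FiniteDimensional ℝ V]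
    (n : ℕ) (hn : 1 ≤ n) (hdim : Module.finrank ℝ V = 2 * n + 1)
    (g : V →ₗ[ℝ] V →ₗ[ℝ] ℝ) (hg_symm : ∀ X Y : V, g X Y = g Y X)
    (hg_nd : ∀ X : V, (∀ Y : V, g X Y = 0) → X = 0)
    (ξ : V) (hξ : g ξ ξ = 1)
    (η : V → ℝ) (hη : ∀ X : V, η X = g X ξ)
    (lam μ : ℝ) (hlamμ : lam + μ = 2 * (n : ℝ))
    (S : V → V → ℝ)
    (hS : ∀ X Y : V, S X Y = -(lam + 1) * g X Y - (μ - 1) * (η X * η Y))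
    (Q : V → V)
    (hQ : ∀ X : V, Q X = -(2 * (n : ℝ) + 1 - μ) • X - ((μ - 1) * η X) • ξ)
    (W₂ : V → V → V)
    (hW₂ : ∀ X Y : V, W₂ X Y =
      (η Y • X - g X Y • ξ)
        + (1 / (2 * (n : ℝ))) • (η Y • Q X - g X Y • Q ξ))
    (hcond : ∀ X Y Z : V, S (W₂ X Y) Z + S Y (W₂ X Z) = 0) :
    μ ≠ 0 := by
  intro hμ
  have hn_pos : (1 : ℝ) ≤ n := by exact_mod_cast hn
  rcases mul_eq_zero.mp (mu_sub_one_mul_lam_add_one_eq_zero (by omega) g hg_symm hg_nd ξ hξ η hη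
    n lam μ (by linarith : (0 : ℝ) < n).ne' S hS Q hQ W₂ hW₂ hcond) with h | h <;> linarith
end

section
/- Assume the pointwise para-Kenmotsu η-Ricci soliton model and let R : V × V × V → V be a trilinear map satisfying R(X,Y)ξ = η(X)·Y − η(Y)·X, η(R(X,Y)Z) = −η(X)·g(Y,Z) + η(Y)·g(X,Z), and R(ξ,X)Y = η(Y)·X − g(X,Y)·ξ for all X, Y, Z ∈ V. Define Q(X) = −(2n+1−μ)·X − (μ−1)·η(X)·ξ and W₂(X,Y)Z = R(X,Y)Z + (1/(2n))·(g(X,Z)·Q(Y) − g(Y,Z)·Q(X)). Suppose the condition S(ξ,X)·W₂ = 0 holds, i.e. for all X, Y, Z, U ∈ V: S(X,W₂(Y,Z)U)·ξ − S(ξ,W₂(Y,Z)U)·X + S(X,Y)·W₂(ξ,Z)U − S(ξ,Y)·W₂(X,Z)U + S(X,Z)·W₂(Y,ξ)U − S(ξ,Z)·W₂(Y,X)U + S(X,U)·W₂(Y,Z)ξ − S(ξ,U)·W₂(Y,Z)X = 0. Then μ² − 2(n+1)·μ + 2n + 1 = 0; equivalently, either μ = 1 and λ = 2n − 1, or μ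 = 2n + 1 and λ = −1. -/
/-!
Applying `η` to the condition `S(ξ,X)·W₂ = 0` kills every term but `S(X, W₂(Y,Z)U)`, because
`η ∘ W₂ = 0` and `S(ξ, ·)` vanishes on `ker η`. On `ker η` the Ricci tensor is `−(λ+1) g`, so either
`λ = −1` or `W₂ = 0`. In the latter case `0 = W₂(ξ,Z)ξ = ((μ−1)/(2n)) (Z − η(Z)ξ)`, and `μ ≠ 1`
would make every vector a multiple of `ξ`, contradicting `dim V = 2n+1 ≥ 3`.
-/

namespace ParaKenmotsu

variable {V : Type*} [AddCommGroup V] [Module ℝ V] {g : V →ₗ[ℝ] V →ₗ[ℝ] ℝ} {ξ : V}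
  {a lam μ : ℝ} {S : V → V → ℝ} {Q : V → V} {R W₂ : V → V → V → V}

theorem inner_xi_ricciOp (hξ : g ξ ξ = 1)
    (hQ : ∀ X, Q X = -(a + 1 - μ) • X - ((μ - 1) * g X ξ) • ξ) (X : V) :
    g (Q X) ξ = -a * g X ξ := by
  simp only [hQ, map_sub, map_smul, LinearMap.sub_apply, LinearMap.smul_apply, smul_eq_mul, hξ]
  ring

theorem inner_xi_w₂ (ha : a ≠ 0) (hξ : g ξ ξ = 1)
    (hηR : ∀ X Y Z, g (R X Y Z) ξ = -(g X ξ) * g Y Z + g Y ξ * g X Z)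
    (hQ : ∀ X, Q X = -(a + 1 - μ) • X - ((μ - 1) * g X ξ) • ξ)
    (hW₂ : ∀ X Y Z, W₂ X Y Z = R X Y Z + (1 / a) • (g X Z • Q Y - g Y Z • Q X)) (X Y Z : V) :
    g (W₂ X Y Z) ξ = 0 := by
  simp only [hW₂, map_add, map_sub, map_smul, LinearMap.add_apply, LinearMap.sub_apply,
    LinearMap.smul_apply, smul_eq_mul, hηR, inner_xi_ricciOp hξ hQ]
  field_simp
  ring

theorem ricci_apply_of_inner_xi_eq_zero
    (hS : ∀ X Y, S X Y = -(lam + 1) * g X Y - (μ - 1) * (g X ξ * g Y ξ))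
    {W : V} (hW : g W ξ = 0) (X : V) :
    S X W = -(lam + 1) * g X W := by
  rw [hS, hW]
  ring

theorem ricci_w₂_eq_zero (hξ : g ξ ξ = 1) (hW : ∀ X Y Z, g (W₂ X Y Z) ξ = 0)
    (hSξ : ∀ Y Z U, S ξ (W₂ Y Z U) = 0)
    (hcond : ∀ X Y Z U : V,
      S X (W₂ Y Z U) • ξ - S ξ (W₂ Y Z U) • X + S X Y • W₂ ξ Z U
        - S ξ Y • W₂ X Z U + S X Z • W₂ Y ξ U - S ξ Z • W₂ Y X U
        + S X U • W₂ Y Z ξ - S ξ U • W₂ Y Z X = 0) (X Y Z U : V) :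
    S X (W₂ Y Z U) = 0 := by
  simpa [hξ, hW, hSξ] using congrArg (g · ξ) (hcond X Y Z U)

theorem eq_zero_of_forall_ricci_eq_zero (hl : lam + 1 ≠ 0) (hg_symm : ∀ X Y, g X Y = g Y X)
    (hg_nd : ∀ X, (∀ Y, g X Y = 0) → X = 0)
    (hS : ∀ X Y, S X Y = -(lam + 1) * g X Y - (μ - 1) * (g X ξ * g Y ξ))
    {W : V} (hW : g W ξ = 0) (h : ∀ X, S X W = 0) : W = 0 := by
  refine hg_nd W fun X => ?_
  have hX := h X
  rw [ricci_apply_of_inner_xi_eq_zero hS hW, hg_symm] at hX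
  exact (mul_eq_zero.mp hX).resolve_left (neg_ne_zero.mpr hl)

theorem w₂_xi_xi (ha : a ≠ 0) (hξ : g ξ ξ = 1)
    (hRξX : ∀ X Y, R ξ X Y = g Y ξ • X - g X Y • ξ)
    (hQ : ∀ X, Q X = -(a + 1 - μ) • X - ((μ - 1) * g X ξ) • ξ)
    (hW₂ : ∀ X Y Z, W₂ X Y Z = R X Y Z + (1 / a) • (g X Z • Q Y - g Y Z • Q X)) (Z : V) :
    W₂ ξ Z ξ = ((μ - 1) / a) • (Z - g Z ξ • ξ) := by
  rw [hW₂, hRξX, hQ, hQ, hξ]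
  match_scalars <;> field_simp <;> ring

end ParaKenmotsu

open ParaKenmotsu in
theorem eta_ricci_soliton_S_xi_W2_general
    {V : Type*} [AddCommGroup V] [Module ℝ V]
    (n : ℕ) (hn : 1 ≤ n) (hdim : Module.finrank ℝ V = 2 * n + 1)
    (g : V →ₗ[ℝ] V →ₗ[ℝ] ℝ) (hg_symm : ∀ X Y : V, g X Y = g Y X)
    (hg_nd : ∀ X : V, (∀ Y : V, g X Y = 0) → X = 0)
    (ξ : V) (hξ : g ξ ξ = 1)
    (η : V → ℝ) (hη : ∀ X : V, η X = g X ξ)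
    (lam μ : ℝ) (hlamμ : lam + μ = 2 * (n : ℝ))
    (S : V → V → ℝ)
    (hS : ∀ X Y : V, S X Y = -(lam + 1) * g X Y - (μ - 1) * (η X * η Y))
    (R : V →ₗ[ℝ] V →ₗ[ℝ] V →ₗ[ℝ] V)
    (hηR : ∀ X Y Z : V, η (R X Y Z) = -(η X) * g Y Z + η Y * g X Z)
    (hRξX : ∀ X Y : V, R ξ X Y = η Y • X - g X Y • ξ)
    (Q : V → V)
    (hQ : ∀ X : V, Q X = -(2 * (n : ℝ) + 1 - μ) • X - ((μ - 1) * η X) • ξ)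
    (W₂ : V → V → V → V)
    (hW₂ : ∀ X Y Z : V, W₂ X Y Z =
      R X Y Z + (1 / (2 * (n : ℝ))) • (g X Z • Q Y - g Y Z • Q X))
    (hcond : ∀ X Y Z U : V,
      S X (W₂ Y Z U) • ξ - S ξ (W₂ Y Z U) • X + S X Y • W₂ ξ Z U
        - S ξ Y • W₂ X Z U + S X Z • W₂ Y ξ U - S ξ Z • W₂ Y X U
        + S X U • W₂ Y Z ξ - S ξ U • W₂ Y Z X = 0) :
    μ ^ 2 - 2 * ((n : ℝ) + 1) * μ + 2 * (n : ℝ) + 1 = 0 ∧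
      ((μ = 1 ∧ lam = 2 * (n : ℝ) - 1) ∨ (μ = 2 * (n : ℝ) + 1 ∧ lam = -1)) := by
  obtain rfl : η = fun X => g X ξ := funext hη
  have hn0 : (2 * n : ℝ) ≠ 0 := by positivity
  have hW X Y Z : g (W₂ X Y Z) ξ = 0 := inner_xi_w₂ hn0 hξ (R := (R · · ·)) hηR hQ hW₂ X Y Z
  have hSξ Y Z U : S ξ (W₂ Y Z U) = 0 := by
    rw [ricci_apply_of_inner_xi_eq_zero hS (hW Y Z U), hg_symm, hW, mul_zero]
  have hSW := ricci_w₂_eq_zero hξ hW hSξ hcond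
  have hcases : (μ = 1 ∧ lam = 2 * n - 1) ∨ (μ = 2 * n + 1 ∧ lam = -1) := by
    by_cases hl : lam + 1 = 0
    · exact .inr ⟨by linarith, by linarith⟩
    have hW₂0 Y Z U : W₂ Y Z U = 0 :=
      eq_zero_of_forall_ricci_eq_zero hl hg_symm hg_nd hS (hW Y Z U) (hSW · Y Z U)
    have hμ : μ = 1 := by
      by_contra hμ
      have hc : (μ - 1) / (2 * n) ≠ 0 := div_ne_zero (sub_ne_zero.mpr hμ) hn0
      have hspan Z : g Z ξ • ξ = Z := by
        have hZ := (w₂_xi_xi hn0 hξ (R := (R · · ·)) hRξX hQ hW₂ Z).symm.trans (hW₂0 ξ Z ξ)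
        exact (sub_eq_zero.mp ((smul_eq_zero.mp hZ).resolve_left hc)).symm
      have := finrank_le_one ξ fun Z => ⟨g Z ξ, hspan Z⟩
      omega
    exact .inl ⟨hμ, by linarith⟩
  refine ⟨?_, hcases⟩
  rcases hcases with ⟨rfl, -⟩ | ⟨rfl, -⟩ <;> ring

/-- Pointwise para-Kenmotsu η-Ricci soliton model with a trilinear
curvature `R` satisfying `R(X,Y)ξ = η(X)Y − η(Y)X`,
`η(R(X,Y)Z) = −η(X)g(Y,Z) + η(Y)g(X,Z)` and
`R(ξ,X)Y = η(Y)X − g(X,Y)ξ`, Ricci operator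
`Q(X) = −(2n+1−μ)X − (μ−1)η(X)ξ` and
`W₂(X,Y)Z = R(X,Y)Z + (1/(2n))(g(X,Z)Q(Y) − g(Y,Z)Q(X))`, satisfying
`S(ξ,X)·W₂ = 0`.  Then `μ² − 2(n+1)μ + 2n + 1 = 0`; equivalently,
either `μ = 1` and `λ = 2n − 1`, or `μ = 2n + 1` and `λ = −1`. -/
theorem eta_ricci_soliton_S_xi_W2
    {V : Type*} [AddCommGroup V] [Module ℝ V] [FiniteDimensional ℝ V]
    (n : ℕ) (hn : 1 ≤ n) (hdim : Module.finrank ℝ V = 2 * n + 1)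
    (g : V →ₗ[ℝ] V →ₗ[ℝ] ℝ) (hg_symm : ∀ X Y : V, g X Y = g Y X)
    (hg_nd : ∀ X : V, (∀ Y : V, g X Y = 0) → X = 0)
    (ξ : V) (hξ : g ξ ξ = 1)
    (η : V → ℝ) (hη : ∀ X : V, η X = g X ξ)
    (lam μ : ℝ) (hlamμ : lam + μ = 2 * (n : ℝ))
    (S : V → V → ℝ)
    (hS : ∀ X Y : V, S X Y = -(lam + 1) * g X Y - (μ - 1) * (η X * η Y))
    (R : V →ₗ[ℝ] V →ₗ[ℝ] V →ₗ[ℝ] V)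
    (hRξ : ∀ X Y : V, R X Y ξ = η X • Y - η Y • X)
    (hηR : ∀ X Y Z : V, η (R X Y Z) = -(η X) * g Y Z + η Y * g X Z)
    (hRξX : ∀ X Y : V, R ξ X Y = η Y • X - g X Y • ξ)
    (Q : V → V)
    (hQ : ∀ X : V, Q X = -(2 * (n : ℝ) + 1 - μ) • X - ((μ - 1) * η X) • ξ)
    (W₂ : V → V → V → V)
    (hW₂ : ∀ X Y Z : V, W₂ X Y Z =
      R X Y Z + (1 / (2 * (n : ℝ))) • (g X Z • Q Y - g Y Z • Q X))
    (hcond : ∀ X Y Z U : V,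
      S X (W₂ Y Z U) • ξ - S ξ (W₂ Y Z U) • X + S X Y • W₂ ξ Z U
        - S ξ Y • W₂ X Z U + S X Z • W₂ Y ξ U - S ξ Z • W₂ Y X U
        + S X U • W₂ Y Z ξ - S ξ U • W₂ Y Z X = 0) :
    μ ^ 2 - 2 * ((n : ℝ) + 1) * μ + 2 * (n : ℝ) + 1 = 0 ∧
      ((μ = 1 ∧ lam = 2 * (n : ℝ) - 1) ∨ (μ = 2 * (n : ℝ) + 1 ∧ lam = -1)) :=
  eta_ricci_soliton_S_xi_W2_general n hn hdim g hg_symm hg_nd ξ hξ η hη lam μ hlamμ S hS R hηR hRξX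
    Q hQ W₂ hW₂ hcond
end

section
/- Assume the pointwise para-Kenmotsu η-Ricci soliton model and let R : V × V × V → V be a trilinear map satisfying R(X,Y)ξ = η(X)·Y − η(Y)·X, η(R(X,Y)Z) = −η(X)·g(Y,Z) + η(Y)·g(X,Z), and R(ξ,X)Y = η(Y)·X − g(X,Y)·ξ for all X, Y, Z ∈ V. Define Q(X) = −(2n+1−μ)·X − (μ−1)·η(X)·ξ and W₂(X,Y)Z = R(X,Y)Z + (1/(2n))·(g(X,Z)·Q(Y) − g(Y,Z)·Q(X)), and suppose that for all X, Y, Z, U ∈ V: S(X,W₂(Y,Z)U)·ξ − S(ξ,W₂(Y,Z)U)·X + S(X,Y)·W₂(ξ,Z)U − S(ξ,Y)·W₂(X,Z)U + S(X,Z)·W₂(Y,ξ)U − S(ξ,Z)·W₂(Y,X)U + S(X,U)·W₂(Y,Z)ξ − S(ξ,U)·W₂(Y,Z)X = 0. Then μ ≠ 0; in other words, on a para-Kenmotsu manifold satisfying S(ξ,X)·W₂ = 0 there is no Ricci soliton (the case μ = 0) with potential vector field ξ. -/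
/-!
Applying `η` to the condition `S(ξ,X)·W₂ = 0` with `Y = U = ξ` kills every term containing
`η ∘ W₂`, which vanishes identically because `ξ` is an eigenvector of `Q` for `−2n`; what remains
says that `W := W₂(ξ,e)ξ` lies in the radical of `S`. For `e ⊥ ξ` one computes
`W = ((μ − 1)/(2n))·e`, and on `ξ^⊥` the Ricci tensor is `−(λ + 1)·g`. Choosing `e ≠ 0` (possible as
`dim V > 1`) forces `(μ − 1)(λ + 1) = 0`, i.e. `μ ∈ {1, 2n + 1}`.
-/

theorem LinearMap.exists_ne_zero_apply_eq_zero_of_one_lt_finrank {K M : Type*} [DivisionRing K]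
    [AddCommGroup M] [Module K M] (f : M →ₗ[K] K) (h : 1 < Module.finrank K M) :
    ∃ v, v ≠ 0 ∧ f v = 0 := by
  by_contra! hf
  have hinj : Function.Injective f := by
    rw [← LinearMap.ker_eq_bot, Submodule.eq_bot_iff]
    intro v hv
    by_contra hv0
    exact hf v hv0 hv
  have := LinearMap.finrank_le_finrank_of_injective hinj
  rw [Module.finrank_self] at this
  omega

section ParaKenmotsu

variable {V : Type*} [AddCommGroup V] [Module ℝ V] {n : ℕ}
  {g : V →ₗ[ℝ] V →ₗ[ℝ] ℝ} {ξ : V} {η : V → ℝ} {lam μ : ℝ} {S : V → V → ℝ}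
  {R : V →ₗ[ℝ] V →ₗ[ℝ] V →ₗ[ℝ] V} {Q : V → V} {W₂ : V → V → V → V}

theorem eta_Q (hξ : g ξ ξ = 1) (hη : ∀ X : V, η X = g X ξ)
    (hQ : ∀ X : V, Q X = -(2 * (n : ℝ) + 1 - μ) • X - ((μ - 1) * η X) • ξ) (X : V) :
    η (Q X) = -(2 * (n : ℝ)) * η X := by
  simp only [hη, hQ, map_sub, map_smul, LinearMap.sub_apply, LinearMap.smul_apply, smul_eq_mul,
    hξ]
  ring

theorem eta_W₂_eq_zero (hn : n ≠ 0) (hη : ∀ X : V, η X = g X ξ)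
    (hηR : ∀ X Y Z : V, η (R X Y Z) = -(η X) * g Y Z + η Y * g X Z)
    (hηQ : ∀ X : V, η (Q X) = -(2 * (n : ℝ)) * η X)
    (hW₂ : ∀ X Y Z : V, W₂ X Y Z =
      R X Y Z + (1 / (2 * (n : ℝ))) • (g X Z • Q Y - g Y Z • Q X)) (X Y Z : V) :
    η (W₂ X Y Z) = 0 := by
  have hn' : (n : ℝ) ≠ 0 := Nat.cast_ne_zero.mpr hn
  have hR := hηR X Y Z
  have hQX := hηQ X
  have hQY := hηQ Y
  simp only [hη] at hR hQX hQY ⊢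
  simp only [hW₂, map_add, map_sub, map_smul, LinearMap.add_apply, LinearMap.sub_apply,
    LinearMap.smul_apply, smul_eq_mul, hR, hQX, hQY]
  field_simp
  ring

theorem S_apply_W₂_xi_xi (hξ : g ξ ξ = 1) (hη : ∀ X : V, η X = g X ξ)
    (hηW : ∀ X Y Z : V, η (W₂ X Y Z) = 0)
    (hcond : ∀ X Y Z U : V,
      S X (W₂ Y Z U) • ξ - S ξ (W₂ Y Z U) • X + S X Y • W₂ ξ Z U
        - S ξ Y • W₂ X Z U + S X Z • W₂ Y ξ U - S ξ Z • W₂ Y X U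
        + S X U • W₂ Y Z ξ - S ξ U • W₂ Y Z X = 0) (X Z : V) :
    S X (W₂ ξ Z ξ) = S ξ (W₂ ξ Z ξ) * η X := by
  have h := congrArg (g · ξ) (hcond X ξ Z ξ)
  simp only [hη] at hηW ⊢
  simp only [map_add, map_sub, map_smul, map_zero, LinearMap.add_apply, LinearMap.sub_apply,
    LinearMap.smul_apply, LinearMap.zero_apply, smul_eq_mul, hηW, hξ] at h
  linarith

theorem S_apply_eq_of_eta_eq_zero
    (hS : ∀ X Y : V, S X Y = -(lam + 1) * g X Y - (μ - 1) * (η X * η Y))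
    {Y : V} (hY : η Y = 0) (X : V) :
    S X Y = -(lam + 1) * g X Y := by
  rw [hS, hY, mul_zero, mul_zero, sub_zero]

theorem S_xi_eq_zero_of_eta_eq_zero (hg_symm : ∀ X Y : V, g X Y = g Y X)
    (hη : ∀ X : V, η X = g X ξ)
    (hS : ∀ X Y : V, S X Y = -(lam + 1) * g X Y - (μ - 1) * (η X * η Y))
    {Y : V} (hY : η Y = 0) :
    S ξ Y = 0 := by
  rw [S_apply_eq_of_eta_eq_zero hS hY, hg_symm, ← hη, hY, mul_zero]

theorem W₂_xi_apply_xi_of_eta_eq_zero (hn : n ≠ 0) (hξ : g ξ ξ = 1) (hη : ∀ X : V, η X = g X ξ)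
    (hRξX : ∀ X Y : V, R ξ X Y = η Y • X - g X Y • ξ)
    (hQ : ∀ X : V, Q X = -(2 * (n : ℝ) + 1 - μ) • X - ((μ - 1) * η X) • ξ)
    (hW₂ : ∀ X Y Z : V, W₂ X Y Z =
      R X Y Z + (1 / (2 * (n : ℝ))) • (g X Z • Q Y - g Y Z • Q X))
    {e : V} (he : η e = 0) :
    W₂ ξ e ξ = ((μ - 1) / (2 * (n : ℝ))) • e := by
  have hn' : (n : ℝ) ≠ 0 := Nat.cast_ne_zero.mpr hn
  have hge : g e ξ = 0 := (hη e).symm.trans he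
  rw [hW₂, hRξX, hQ, hQ, hη, hη, hξ, hge]
  match_scalars <;> field_simp <;> ring

end ParaKenmotsu

theorem no_ricci_soliton_S_xi_W2_general
    {V : Type*} [AddCommGroup V] [Module ℝ V]
    (n : ℕ) (hn : 1 ≤ n) (hdim : Module.finrank ℝ V = 2 * n + 1)
    (g : V →ₗ[ℝ] V →ₗ[ℝ] ℝ) (hg_symm : ∀ X Y : V, g X Y = g Y X)
    (hg_nd : ∀ X : V, (∀ Y : V, g X Y = 0) → X = 0)
    (ξ : V) (hξ : g ξ ξ = 1)
    (η : V → ℝ) (hη : ∀ X : V, η X = g X ξ)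
    (lam μ : ℝ) (hlamμ : lam + μ = 2 * (n : ℝ))
    (S : V → V → ℝ)
    (hS : ∀ X Y : V, S X Y = -(lam + 1) * g X Y - (μ - 1) * (η X * η Y))
    (R : V →ₗ[ℝ] V →ₗ[ℝ] V →ₗ[ℝ] V)
    (hηR : ∀ X Y Z : V, η (R X Y Z) = -(η X) * g Y Z + η Y * g X Z)
    (hRξX : ∀ X Y : V, R ξ X Y = η Y • X - g X Y • ξ)
    (Q : V → V)
    (hQ : ∀ X : V, Q X = -(2 * (n : ℝ) + 1 - μ) • X - ((μ - 1) * η X) • ξ)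
    (W₂ : V → V → V → V)
    (hW₂ : ∀ X Y Z : V, W₂ X Y Z =
      R X Y Z + (1 / (2 * (n : ℝ))) • (g X Z • Q Y - g Y Z • Q X))
    (hcond : ∀ X Y Z U : V,
      S X (W₂ Y Z U) • ξ - S ξ (W₂ Y Z U) • X + S X Y • W₂ ξ Z U
        - S ξ Y • W₂ X Z U + S X Z • W₂ Y ξ U - S ξ Z • W₂ Y X U
        + S X U • W₂ Y Z ξ - S ξ U • W₂ Y Z X = 0) :
    μ ≠ 0 := by
  have hn0 : n ≠ 0 := by omega
  obtain ⟨e, he0, hηe⟩ : ∃ e, e ≠ 0 ∧ η e = 0 := by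
    obtain ⟨e, he0, he⟩ := (g.flip ξ).exists_ne_zero_apply_eq_zero_of_one_lt_finrank (by omega)
    exact ⟨e, he0, (hη e).trans he⟩
  obtain ⟨X, hX⟩ : ∃ X, g X e ≠ 0 := by
    by_contra! h
    exact he0 (hg_nd e fun Y => (hg_symm e Y).trans (h Y))
  have hηW := eta_W₂_eq_zero hn0 hη hηR (eta_Q hξ hη hQ) hW₂
  have hSW : S X (W₂ ξ e ξ) = 0 := by
    rw [S_apply_W₂_xi_xi hξ hη hηW hcond,
      S_xi_eq_zero_of_eta_eq_zero hg_symm hη hS (hηW ξ e ξ), zero_mul]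
  rw [S_apply_eq_of_eta_eq_zero hS (hηW ξ e ξ),
    W₂_xi_apply_xi_of_eta_eq_zero hn0 hξ hη hRξX hQ hW₂ hηe, map_smul, smul_eq_mul] at hSW
  simp only [mul_eq_zero, neg_eq_zero, div_eq_zero_iff, hX, or_false, sub_eq_zero] at hSW
  have hn' : (1 : ℝ) ≤ n := by exact_mod_cast hn
  intro hμ
  rcases hSW with hlam | hμ₁ | htwo | hn_zero <;> linarith

/-- Pointwise para-Kenmotsu η-Ricci soliton model with a trilinear
curvature `R` satisfying `R(X,Y)ξ = η(X)Y − η(Y)X`,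
`η(R(X,Y)Z) = −η(X)g(Y,Z) + η(Y)g(X,Z)` and
`R(ξ,X)Y = η(Y)X − g(X,Y)ξ`, Ricci operator
`Q(X) = −(2n+1−μ)X − (μ−1)η(X)ξ` and
`W₂(X,Y)Z = R(X,Y)Z + (1/(2n))(g(X,Z)Q(Y) − g(Y,Z)Q(X))`, satisfying
`S(ξ,X)·W₂ = 0`.  Then `μ ≠ 0`: there is no Ricci soliton (the case
`μ = 0`) with potential vector field `ξ`. -/
theorem no_ricci_soliton_S_xi_W2
    {V : Type*} [AddCommGroup V] [Module ℝ V] [FiniteDimensional ℝ V]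
    (n : ℕ) (hn : 1 ≤ n) (hdim : Module.finrank ℝ V = 2 * n + 1)
    (g : V →ₗ[ℝ] V →ₗ[ℝ] ℝ) (hg_symm : ∀ X Y : V, g X Y = g Y X)
    (hg_nd : ∀ X : V, (∀ Y : V, g X Y = 0) → X = 0)
    (ξ : V) (hξ : g ξ ξ = 1)
    (η : V → ℝ) (hη : ∀ X : V, η X = g X ξ)
    (lam μ : ℝ) (hlamμ : lam + μ = 2 * (n : ℝ))
    (S : V → V → ℝ)
    (hS : ∀ X Y : V, S X Y = -(lam + 1) * g X Y - (μ - 1) * (η X * η Y))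
    (R : V →ₗ[ℝ] V →ₗ[ℝ] V →ₗ[ℝ] V)
    (hRξ : ∀ X Y : V, R X Y ξ = η X • Y - η Y • X)
    (hηR : ∀ X Y Z : V, η (R X Y Z) = -(η X) * g Y Z + η Y * g X Z)
    (hRξX : ∀ X Y : V, R ξ X Y = η Y • X - g X Y • ξ)
    (Q : V → V)
    (hQ : ∀ X : V, Q X = -(2 * (n : ℝ) + 1 - μ) • X - ((μ - 1) * η X) • ξ)
    (W₂ : V → V → V → V)
    (hW₂ : ∀ X Y Z : V, W₂ X Y Z =
      R X Y Z + (1 / (2 * (n : ℝ))) • (g X Z • Q Y - g Y Z • Q X))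
    (hcond : ∀ X Y Z U : V,
      S X (W₂ Y Z U) • ξ - S ξ (W₂ Y Z U) • X + S X Y • W₂ ξ Z U
        - S ξ Y • W₂ X Z U + S X Z • W₂ Y ξ U - S ξ Z • W₂ Y X U
        + S X U • W₂ Y Z ξ - S ξ U • W₂ Y Z X = 0) :
    μ ≠ 0 :=
  no_ricci_soliton_S_xi_W2_general n hn hdim g hg_symm hg_nd ξ hξ η hη lam μ hlamμ S hS R hηR hRξX Q
    hQ W₂ hW₂ hcond
end
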